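/- arXiv:2209.09744 — 2 statements merged into one kernel-verified Lean document; each statement's English description precedes it below -/
import Mathlib

section
/- Let O be a commutative ring, ℓ an element of O, and (𝒟, Σ) an O-linear triangulated category. Define 𝒟[ℓ⁻¹] to be the category with the same objects as 𝒟 and with Hom_{𝒟[ℓ⁻¹]}(X,Y) := Hom_𝒟(X,Y)[ℓ⁻¹], the localization of the O-module Hom_𝒟(X,Y) at the multiplicative set of powers of ℓ, with composition induced by that of 𝒟. Then Σ induces an auto-equivalence of 𝒟[ℓ⁻¹], and, declaring a triangle in 𝒟[ℓ⁻¹] to be distinguished exactly when it is isomorphic to the image, under the canonical functor 𝒟 → 𝒟[ℓ⁻¹], of a distinguished triangle of 𝒟, the category 𝒟[ℓ⁻¹] with this shift and this class of distinguished triangles is a triangulated category, i.e. it satisfies Verdier's axioms TR1, TR2, TR3 and the octahedral axiom TR4. -/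
/-!
Every morphism `Q X ⟶ Q Y` becomes the image of a morphism of `𝒟` after multiplication by some
`s ∈ S`, and such scalars act invertibly on the localized `Hom`s. Taking the distinguished
triangles of `𝒟[S⁻¹]` to be the essential image of those of `𝒟`, cones and octahedra are lifted
from `𝒟` after clearing denominators. For TR3, clearing denominators turns a square into its
multiple by some `w ∈ S`; the completion in `𝒟` is divided by `w` using a morphism of triangles
extending multiplication by `w`, whose image is an isomorphism by the five lemma: localization
is exact, so `Hom(A, Q -)` sends distinguished triangles of `𝒟` to long exact sequences.
-/

open CategoryTheory CategoryTheory.Limits CategoryTheory.Pretriangulated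

universe v u

namespace CategoryTheory

lemma Functor.isIso_map_shift_map {C D : Type*} [Category* C] [Category* D] [HasShift C ℤ]
    [HasShift D ℤ] (F : C ⥤ D) [F.CommShift ℤ] {X Y : C} (f : X ⟶ Y) [IsIso (F.map f)]
    (n : ℤ) : IsIso (F.map (f⟦n⟧')) :=
  (NatIso.isIso_map_iff (F.commShiftIso n) f).2 (inferInstanceAs (IsIso ((F.map f)⟦n⟧')))

lemma Functor.rightComp_map_comm₁ {C D : Type*} [Category* C] [Category* D] [HasShift C ℤ]
    [Preadditive D] (F : C ⥤ D) {T T' : Triangle C} (φ : T ⟶ T') (A : D) :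
    (Preadditive.rightComp A (F.map T'.mor₁)).comp (Preadditive.rightComp A (F.map φ.hom₁)) =
      (Preadditive.rightComp A (F.map φ.hom₂)).comp (Preadditive.rightComp A (F.map T.mor₁)) := by
  ext u
  change (u ≫ F.map φ.hom₁) ≫ F.map T'.mor₁ = (u ≫ F.map T.mor₁) ≫ F.map φ.hom₂
  simp only [Category.assoc, ← F.map_comp, φ.comm₁]

variable {O : Type*} [CommRing O] (S : Submonoid O)
  {C D : Type*} [Category* C] [Category* D] [Preadditive C] [Preadditive D]
  [Linear O C] [Linear O D] (Q : C ⥤ D) [Q.Additive] [Q.Linear O]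

def IsHomLocalization : Prop :=
  ∀ X Y : C, IsLocalizedModule S (Q.mapLinearMap O : (X ⟶ Y) →ₗ[O] (Q.obj X ⟶ Q.obj Y))

namespace IsHomLocalization

variable {S Q} (hQ : IsHomLocalization S Q)
include hQ

lemma exists_smul_eq_map {X Y : C} (g : Q.obj X ⟶ Q.obj Y) :
    ∃ s ∈ S, ∃ f : X ⟶ Y, s • g = Q.map f := by
  obtain ⟨⟨f, s⟩, hs⟩ := (hQ X Y).surj g
  exact ⟨s, s.2, f, hs⟩

lemma exists_smul_eq_smul_of_map_eq {X Y : C} {f g : X ⟶ Y} (h : Q.map f = Q.map g) :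
    ∃ s ∈ S, s • f = s • g := by
  obtain ⟨s, hs⟩ := (hQ X Y).exists_of_eq (x₁ := f) (x₂ := g) h
  exact ⟨s, s.2, hs⟩

lemma exists_smul_eq_map_of_comm {X X' Y Y' : C} (f : X ⟶ X') (g : Y ⟶ Y')
    (a : Q.obj X ⟶ Q.obj Y) (b : Q.obj X' ⟶ Q.obj Y') (fac : Q.map f ≫ b = a ≫ Q.map g) :
    ∃ w ∈ S, ∃ (a₀ : X ⟶ Y) (b₀ : X' ⟶ Y'),
      Q.map a₀ = w • a ∧ Q.map b₀ = w • b ∧ f ≫ b₀ = a₀ ≫ g := by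
  obtain ⟨s, hs, a₁, ha₁⟩ := hQ.exists_smul_eq_map a
  obtain ⟨t, ht, b₁, hb₁⟩ := hQ.exists_smul_eq_map b
  obtain ⟨u, hu, h⟩ := hQ.exists_smul_eq_smul_of_map_eq (f := f ≫ (s • b₁))
    (g := (t • a₁) ≫ g) (by
      rw [Q.map_comp, Q.map_comp, Q.map_smul, Q.map_smul, ← ha₁, ← hb₁, Linear.comp_smul,
        Linear.comp_smul, Linear.smul_comp, Linear.smul_comp, fac, smul_comm s t])
  refine ⟨u * t * s, S.mul_mem (S.mul_mem hu ht) hs, u • t • a₁, u • s • b₁, ?_, ?_, ?_⟩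
  · rw [Q.map_smul, Q.map_smul, ← ha₁, smul_smul, smul_smul]
  · rw [Q.map_smul, Q.map_smul, ← hb₁, smul_smul, smul_smul, mul_right_comm]
  · simpa only [Linear.comp_smul, Linear.smul_comp] using h

variable (hQobj : Function.Surjective Q.obj)
include hQobj

lemma smul_bijective {A B : D} {s : O} (hs : s ∈ S) :
    Function.Bijective fun g : A ⟶ B => s • g := by
  obtain ⟨X, rfl⟩ := hQobj A
  obtain ⟨Y, rfl⟩ := hQobj B
  exact (Module.End.isUnit_iff _).1 ((hQ X Y).map_units ⟨s, hs⟩)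

lemma isIso_smul_id (A : D) {s : O} (hs : s ∈ S) : IsIso (s • 𝟙 A) := by
  obtain ⟨e, he⟩ := (hQ.smul_bijective hQobj (A := A) (B := A) hs).2 (𝟙 A)
  refine ⟨e, ?_, ?_⟩
  · rw [Linear.smul_comp, Category.id_comp]
    exact he
  · rw [Linear.comp_smul, Category.comp_id]
    exact he

lemma essSurj_mapComposableArrows_two : (Q.mapComposableArrows 2).EssSurj where
  mem_essImage α := by
    obtain ⟨A₀, A₁, A₂, f, g, rfl⟩ := ComposableArrows.mk₂_surjective α
    obtain ⟨X₀, rfl⟩ := hQobj A₀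
    obtain ⟨X₁, rfl⟩ := hQobj A₁
    obtain ⟨X₂, rfl⟩ := hQobj A₂
    obtain ⟨s, hs, f₀, hf₀⟩ := hQ.exists_smul_eq_map f
    obtain ⟨t, ht, g₀, hg₀⟩ := hQ.exists_smul_eq_map g
    have := hQ.isIso_smul_id hQobj (Q.obj X₁) hs
    have := hQ.isIso_smul_id hQobj (Q.obj X₂) (S.mul_mem hs ht)
    let e₁ : Q.obj X₁ ≅ Q.obj X₁ := asIso (s • 𝟙 _)
    let e₂ : Q.obj X₂ ≅ Q.obj X₂ := asIso ((s * t) • 𝟙 _)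
    refine ⟨ComposableArrows.mk₂ f₀ g₀, ⟨(ComposableArrows.isoMk₂
      (f := ComposableArrows.mk₂ f g) (g := (Q.mapComposableArrows 2).obj (.mk₂ f₀ g₀))
      (Iso.refl _) e₁ e₂ ?_ ?_).symm⟩⟩
    · change f ≫ (s • 𝟙 _) = 𝟙 _ ≫ Q.map f₀
      rw [Category.id_comp, Linear.comp_smul, Category.comp_id, hf₀]
    · change g ≫ ((s * t) • 𝟙 _) = (s • 𝟙 _) ≫ Q.map g₀
      rw [Linear.comp_smul, Category.comp_id, Linear.smul_comp, Category.id_comp, mul_smul, hg₀]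

section Pretriangulated

variable [HasZeroObject C] [HasShift C ℤ] [∀ n : ℤ, (shiftFunctor C n).Additive]
  [Pretriangulated C]

lemma exact_rightComp_map_mor₁_mor₂ (T : Triangle C) (hT : T ∈ distTriang C) (A : D) :
    Function.Exact (Preadditive.rightComp A (Q.map T.mor₁))
      (Preadditive.rightComp A (Q.map T.mor₂)) := by
  obtain ⟨U, rfl⟩ := hQobj A
  intro v
  change v ≫ Q.map T.mor₂ = 0 ↔ ∃ u, u ≫ Q.map T.mor₁ = v
  refine ⟨fun hv => ?_, ?_⟩
  · obtain ⟨s, hs, v₀, hv₀⟩ := hQ.exists_smul_eq_map v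
    obtain ⟨t, ht, hvt⟩ := hQ.exists_smul_eq_smul_of_map_eq (f := v₀ ≫ T.mor₂) (g := 0) (by
      rw [Q.map_comp, ← hv₀, Linear.smul_comp, hv, smul_zero, Q.map_zero])
    obtain ⟨x, hx⟩ := Triangle.coyoneda_exact₂ T hT (t • v₀)
      (by rw [Linear.smul_comp, hvt, smul_zero])
    have := hQ.isIso_smul_id hQobj (Q.obj U) (S.mul_mem ht hs)
    refine ⟨inv ((t * s) • 𝟙 (Q.obj U)) ≫ Q.map x, ?_⟩
    simp only [Category.assoc, ← Q.map_comp, ← hx, Q.map_smul, ← hv₀, smul_smul]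
    rw [IsIso.inv_comp_eq, Linear.smul_comp, Category.id_comp]
  · rintro ⟨u, rfl⟩
    simp only [Category.assoc, ← Q.map_comp, comp_distTriang_mor_zero₁₂ T hT, Q.map_zero,
      Limits.comp_zero]

variable [HasShift D ℤ] [Q.CommShift ℤ]

lemma isIso_map_hom₃ {T T' : Triangle C} (φ : T ⟶ T') (hT : T ∈ distTriang C)
    (hT' : T' ∈ distTriang C) (h₁ : IsIso (Q.map φ.hom₁)) (h₂ : IsIso (Q.map φ.hom₂)) :
    IsIso (Q.map φ.hom₃) := by
  have h₄ : IsIso (Q.map (φ.hom₁⟦(1 : ℤ)⟧')) := Q.isIso_map_shift_map φ.hom₁ 1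
  have h₅ : IsIso (Q.map (φ.hom₂⟦(1 : ℤ)⟧')) := Q.isIso_map_shift_map φ.hom₂ 1
  refine isIso_of_yoneda_map_bijective _ fun A => ?_
  have bij {X Y : D} (f : X ⟶ Y) (hf : IsIso f) := (isIso_iff_yoneda_map_bijective f).1 hf A
  have row (T : Triangle C) (hT : T ∈ distTriang C) :=
    hQ.exact_rightComp_map_mor₁_mor₂ hQobj T hT A
  have rot := rot_of_distTriang _ hT
  have rot' := rot_of_distTriang _ hT'
  -- The five lemma for `Hom(A, Q -)` applied to `T`, `T.rotate` and `T.rotate.rotate`.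
  exact AddMonoidHom.bijective_of_surjective_of_bijective_of_bijective_of_injective _ _ _ _ _ _ _ _
    _ _ (Preadditive.rightComp A (Q.map φ.hom₃)) _ _
    (Q.rightComp_map_comm₁ φ A)
    (Q.rightComp_map_comm₁ ((rotate C).map φ) A)
    (Q.rightComp_map_comm₁ ((rotate C).map ((rotate C).map φ)) A)
    (Q.rightComp_map_comm₁ ((rotate C).map ((rotate C).map ((rotate C).map φ))) A)
    (row T hT) (row _ rot) (row _ (rot_of_distTriang _ rot))
    (row T' hT') (row _ rot') (row _ (rot_of_distTriang _ rot'))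
    (bij _ h₁).2 (bij _ h₂) (bij _ h₄) (bij _ h₅).1

lemma exists_mapTriangle_hom {T₁ T₂ : Triangle C} (hT₁ : T₁ ∈ distTriang C)
    (hT₂ : T₂ ∈ distTriang C) (a : Q.obj T₁.obj₁ ⟶ Q.obj T₂.obj₁)
    (b : Q.obj T₁.obj₂ ⟶ Q.obj T₂.obj₂) (fac : Q.map T₁.mor₁ ≫ b = a ≫ Q.map T₂.mor₁) :
    ∃ φ : Q.mapTriangle.obj T₁ ⟶ Q.mapTriangle.obj T₂, φ.hom₁ = a ∧ φ.hom₂ = b := by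
  obtain ⟨w, hw, a₀, b₀, ha₀, hb₀, fac₀⟩ := hQ.exists_smul_eq_map_of_comm _ _ a b fac
  -- `χ` completes `(w • a, w • b)` in `C` and `ψ` extends multiplication by `w`; since
  -- `Q ψ` is invertible, `(Q ψ)⁻¹ ≫ Q χ` divides `Q χ` by `w`.
  obtain ⟨χ, rfl, rfl⟩ : ∃ χ : T₁ ⟶ T₂, χ.hom₁ = a₀ ∧ χ.hom₂ = b₀ :=
    ⟨completeDistinguishedTriangleMorphism T₁ T₂ hT₁ hT₂ a₀ b₀ fac₀, rfl, rfl⟩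
  obtain ⟨ψ, hψ₁, hψ₂⟩ : ∃ ψ : T₁ ⟶ T₁, ψ.hom₁ = w • 𝟙 _ ∧ ψ.hom₂ = w • 𝟙 _ :=
    ⟨completeDistinguishedTriangleMorphism T₁ T₁ hT₁ hT₁ _ _ (by simp), rfl, rfl⟩
  have hQψ₁ : Q.map ψ.hom₁ = w • 𝟙 _ := by rw [hψ₁, Q.map_smul, Q.map_id]
  have hQψ₂ : Q.map ψ.hom₂ = w • 𝟙 _ := by rw [hψ₂, Q.map_smul, Q.map_id]
  have iso₁ : IsIso (Q.map ψ.hom₁) := hQψ₁ ▸ hQ.isIso_smul_id hQobj (Q.obj T₁.obj₁) hw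
  have iso₂ : IsIso (Q.map ψ.hom₂) := hQψ₂ ▸ hQ.isIso_smul_id hQobj (Q.obj T₁.obj₂) hw
  have := Triangle.isIso_of_isIsos (Q.mapTriangle.map ψ) iso₁ iso₂
    (hQ.isIso_map_hom₃ hQobj ψ hT₁ hT₁ iso₁ iso₂)
  obtain ⟨φ, hφ⟩ : ∃ φ, Q.mapTriangle.map ψ ≫ φ = Q.mapTriangle.map χ :=
    ⟨_, IsIso.hom_inv_id_assoc _ _⟩
  refine ⟨φ, (cancel_epi (Q.map ψ.hom₁)).1 ?_, (cancel_epi (Q.map ψ.hom₂)).1 ?_⟩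
  · refine (congrArg TriangleMorphism.hom₁ hφ).trans ?_
    dsimp [Functor.mapTriangle, Triangle.mk]
    rw [ha₀, hQψ₁, Linear.smul_comp, Category.id_comp]
  · refine (congrArg TriangleMorphism.hom₂ hφ).trans ?_
    dsimp [Functor.mapTriangle, Triangle.mk]
    rw [hb₀, hQψ₂, Linear.smul_comp, Category.id_comp]

lemma exists_distinguished_cocone {A B : D} (f : A ⟶ B) :
    ∃ (Z : D) (g : B ⟶ Z) (h : Z ⟶ A⟦(1 : ℤ)⟧), Triangle.mk f g h ∈ Q.essImageDistTriang := by
  obtain ⟨X, rfl⟩ := hQobj A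
  obtain ⟨Y, rfl⟩ := hQobj B
  obtain ⟨s, hs, f₀, hf₀⟩ := hQ.exists_smul_eq_map f
  obtain ⟨Z, g, h, hT⟩ := distinguished_cocone_triangle f₀
  have := hQ.isIso_smul_id hQobj (Q.obj X) hs
  refine ⟨Q.obj Z, Q.map g, Q.map h ≫ (Q.commShiftIso (1 : ℤ)).hom.app X ≫ (s • 𝟙 _)⟦(1 : ℤ)⟧',
    _, Triangle.isoMk _ (Q.mapTriangle.obj (Triangle.mk f₀ g h)) (asIso (s • 𝟙 (Q.obj X))).symm
      (Iso.refl _) (Iso.refl _) ?_ ?_ ?_, hT⟩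
  · dsimp [Functor.mapTriangle, Triangle.mk]
    rw [Category.comp_id, ← hf₀, IsIso.eq_inv_comp, Linear.smul_comp, Category.id_comp]
  · dsimp [Functor.mapTriangle, Triangle.mk]
    simp
  · dsimp [Functor.mapTriangle, Triangle.mk]
    simp

variable [HasZeroObject D] [∀ n : ℤ, (shiftFunctor D n).Additive]

abbrev pretriangulated : Pretriangulated D where
  distinguishedTriangles := Q.essImageDistTriang
  isomorphic_distinguished _ hT _ e := Q.essImageDistTriang_mem_of_iso e hT
  contractible_distinguished :=
    have := Q.essSurj_of_surj hQobj
    Q.contractible_mem_essImageDistTriang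
  distinguished_cocone_triangle := hQ.exists_distinguished_cocone hQobj
  rotate_distinguished_triangle := Q.rotate_essImageDistTriang
  complete_distinguished_triangle_morphism :=
    Q.complete_distinguished_essImageDistTriang_morphism
      fun _ _ hT₁ hT₂ a b fac => hQ.exists_mapTriangle_hom hQobj hT₁ hT₂ a b fac

lemma isTriangulated [IsTriangulated C] :
    letI := hQ.pretriangulated hQobj
    IsTriangulated D := by
  let := hQ.pretriangulated hQobj
  have : Q.IsTriangulated := ⟨fun T hT => ⟨T, Iso.refl _, hT⟩⟩
  have := hQ.essSurj_mapComposableArrows_two hQobj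
  exact isTriangulated_of_essSurj_mapComposableArrows_two Q

end Pretriangulated

end IsHomLocalization

end CategoryTheory

theorem localization_at_ell_isTriangulated
    {O : Type*} [CommRing O] (ℓ : O)
    (D : Type u) [Category.{v} D] [Preadditive D] [Linear O D]
    [HasZeroObject D] [HasShift D ℤ] [∀ n : ℤ, (shiftFunctor D n).Additive]
    [Pretriangulated D] [IsTriangulated D]
    (D' : Type u) [Category.{v} D'] [Preadditive D'] [Linear O D']
    [HasZeroObject D'] [HasShift D' ℤ] [∀ n : ℤ, (shiftFunctor D' n).Additive]
    (Q : D ⥤ D') [Q.Additive] [Q.Linear O] [Q.CommShift ℤ]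
    (hQobj : Function.Bijective Q.obj)
    (hQloc : ∀ X Y : D,
      IsLocalizedModule (Submonoid.powers ℓ)
        ({ toFun := fun f => Q.map f
           map_add' := fun _ _ => Q.map_add
           map_smul' := fun _ _ => Q.map_smul _ _ } :
          (X ⟶ Y) →ₗ[O] (Q.obj X ⟶ Q.obj Y))) :
    ∃ hP : Pretriangulated D',
      hP.distinguishedTriangles =
        {T : Triangle D' | ∃ T' ∈ (distTriang D), Nonempty (T ≅ Q.mapTriangle.obj T')} ∧
      @IsTriangulated D' _ _ _ _ _ hP := by
  have hQ : IsHomLocalization (Submonoid.powers ℓ) Q := hQloc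
  refine ⟨hQ.pretriangulated hQobj.2, ?_, hQ.isTriangulated hQobj.2⟩
  ext T
  exact ⟨fun ⟨T', e, hT'⟩ => ⟨T', hT', ⟨e⟩⟩, fun ⟨T', hT', ⟨e⟩⟩ => ⟨T', e, hT'⟩⟩
end

section
/- Let A be an O_E-module, r ∈ ℕ and d ∈ ℕ. For every continuous group automorphism σ of ℤ_ℓ^r (equivalently, for the ℤ_ℓ-linear automorphism given by any matrix in GL_r(ℤ_ℓ)) and every function f : ℤ_ℓ^r → A that is polynomial of total degree ≤ d, the function f ∘ σ is again polynomial of total degree ≤ d. Consequently, for a topological group N topologically isomorphic to ℤ_ℓ^r, the notion of polynomial function N → A and its total degree do not depend on the choice of topological group isomorphism N ≅ ℤ_ℓ^r. -/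
open scoped BigOperators

/-- The ring of integers `O_E` of a finite extension `E` of `ℚ_ℓ`, realized as the
integral closure of `ℤ_ℓ` in `E`. -/
noncomputable def PaperOE (ℓ : ℕ) [Fact (Nat.Prime ℓ)] (E : Type*) [Field E] [Algebra ℤ_[ℓ] E] :
    Subalgebra ℤ_[ℓ] E :=
  integralClosure ℤ_[ℓ] E

/-- `f : ℤ_ℓ^ι → A` is a polynomial function of total degree `≤ d`, with respect to the
extended binomial coefficient function `Cb : ℤ_ℓ × ℕ → ℤ_ℓ`: there is a finitely
supported family of coefficients `a_ι ∈ A`, vanishing in total degree `> d`, with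
`f x = Σ_m (∏ t, C(x t, m t)) • a_m`, the `ℤ_ℓ`-scalars acting through the
`ℤ_ℓ`-algebra structure of `O`. -/
def IsPolyOfDeg {ℓ : ℕ} [Fact (Nat.Prime ℓ)] (Cb : ℤ_[ℓ] → ℕ → ℤ_[ℓ])
    (O : Type*) [CommRing O] [Algebra ℤ_[ℓ] O]
    {A : Type*} [AddCommGroup A] [Module O A]
    {ι : Type*} [Fintype ι] (d : ℕ) (f : (ι → ℤ_[ℓ]) → A) : Prop :=
  ∃ a : (ι → ℕ) →₀ A,
    (∀ m : ι → ℕ, (∑ t, m t) > d → a m = 0) ∧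
    ∀ x : ι → ℤ_[ℓ], f x = a.sum fun m v => algebraMap ℤ_[ℓ] O (∏ t, Cb (x t) (m t)) • v

/-!
A continuous additive endomorphism of `ℤ_ℓ^r` is `ℤ_ℓ`-linear because `ℕ` is dense in `ℤ_ℓ`, and
`C(x, k)` is the binomial coefficient `Ring.choose x k` of the binomial ring `ℤ_ℓ`. It therefore
suffices to show that for a linear map `L` the function `x ↦ ∏ₜ C((L x)ₜ, mₜ)` is a
`ℤ_ℓ`-combination of binomial monomials `∏ⱼ C(xⱼ, nⱼ)` with `Σ n ≤ Σ m`. The spans `P_d` of the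
monomials of total degree `≤ d` satisfy `P_a * P_b ≤ P_(a+b)`, so by Vandermonde's identity
`C(y + z, k) = Σ C(y, a) C(z, k - a)` everything reduces to the one-variable facts
`C(y, a) C(y, b) ∈ P_(a+b)` and `C(y c, k) ∈ P_k`. Up to a factorial, both functions are
polynomials of degree `≤ a + b` (resp. `≤ k`), so a forward difference of order one more
vanishes, and Newton's interpolation formula, proved on `ℕ` and extended by continuity, expands
them in the `C(y, i)`.
-/

open Polynomial Finset
open scoped fwdDiff

theorem Ring.factorial_nsmul_choose_eq_eval {R : Type*} [Ring R] [BinomialRing R]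
    (x : R) (k : ℕ) : k.factorial • Ring.choose x k = (descPochhammer R k).eval x := by
  rw [← Ring.descPochhammer_eq_factorial_smul_choose, ← descPochhammer_map (Int.castRingHom R),
    eval_map, ← eval₂_smulOneHom_eq_smeval]
  congr 1
  ext
  simp

theorem fwdDiff_iter_eq_zero_of_nsmul_eq_eval {R : Type*} [CommRing R] [IsAddTorsionFree R]
    {g : R → R} {N n : ℕ} (hN : N ≠ 0) {Q : R[X]} (hQ : Q.natDegree < n)
    (hgQ : ∀ x, N • g x = Q.eval x) : (Δ_[1])^[n] g = 0 := by
  have h : N • (Δ_[1])^[n] g = 0 := by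
    rw [← fwdDiff_iter_const_smul, show N • g = Q.eval from funext hgQ]
    exact Polynomial.fwdDiff_iter_eq_zero_of_degree_lt hQ
  funext x
  exact nsmul_right_injective hN (by simpa using congrFun h x)

theorem fwdDiff_iter_eq_zero_of_le {M G : Type*} [AddCommMonoid M] [AddCommGroup G] {h : M}
    {f : M → G} {m n : ℕ} (hmn : m ≤ n) (hf : (Δ_[h])^[m] f = 0) : (Δ_[h])^[n] f = 0 := by
  obtain ⟨j, rfl⟩ := Nat.exists_eq_add_of_le hmn
  rw [add_comm, Function.iterate_add_apply, hf]
  exact Function.iterate_fixed (fwdDiff_const h 0) j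

namespace PadicInt

variable {p : ℕ} [Fact p.Prime]

theorem eq_choose_of_continuous {Cb : ℤ_[p] → ℕ → ℤ_[p]} (hc : ∀ k, Continuous fun x => Cb x k)
    (hn : ∀ n k : ℕ, Cb n k = n.choose k) : Cb = fun x k => Ring.choose x k := by
  funext x k
  refine congrFun (denseRange_natCast.equalizer (hc k) (continuous_choose k) (funext fun n => ?_)) x
  simp [hn, Ring.choose_natCast]

variable (p) in
noncomputable def binomialSpan (k : ℕ) : Submodule ℤ_[p] (ℤ_[p] → ℤ_[p]) :=
  Submodule.span ℤ_[p] (Set.range fun (i : Fin (k + 1)) x => Ring.choose x i)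

/-- Newton's interpolation formula `g = Σ_{i ≤ k} (Δ^i g) 0 • C(·, i)`, checked on `ℕ`. -/
theorem mem_binomialSpan_of_fwdDiff_iter_eq_zero {g : ℤ_[p] → ℤ_[p]} (hg : Continuous g) {k : ℕ}
    (h : (Δ_[1])^[k + 1] g = 0) : g ∈ binomialSpan p k := by
  have hnewton : g = ∑ i : Fin (k + 1), (Δ_[1])^[i] g 0 • fun x => Ring.choose x i := by
    refine denseRange_natCast.equalizer hg (by rw [Finset.sum_fn]; fun_prop) (funext fun n => ?_)
    have hshift := shift_eq_sum_fwdDiff_iter 1 g n 0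
    rw [zero_add, nsmul_one] at hshift
    simp only [Function.comp_apply, Finset.sum_apply, Pi.smul_apply, smul_eq_mul,
      Ring.choose_natCast, hshift]
    rw [Fin.sum_univ_eq_sum_range (fun i => (Δ_[1])^[i] g 0 * (n.choose i : ℤ_[p])),
      sum_subset (range_subset_range.2 (Nat.le_add_right (n + 1) k)) fun i _ hi => ?_,
      ← sum_subset (range_subset_range.2 (by omega : k + 1 ≤ n + 1 + k)) fun i _ hi => ?_]
    · exact sum_congr rfl fun i _ => by rw [nsmul_eq_mul, mul_comm]
    · rw [fwdDiff_iter_eq_zero_of_le (by simpa using hi) h, Pi.zero_apply, smul_zero]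
    · rw [Nat.choose_eq_zero_of_lt (by simpa using hi), zero_smul]
  rw [hnewton]
  exact Submodule.sum_mem _ fun i _ => Submodule.smul_mem _ _ (Submodule.subset_span ⟨i, rfl⟩)

theorem mem_binomialSpan_of_nsmul_eq_eval {g : ℤ_[p] → ℤ_[p]} (hg : Continuous g) {N k : ℕ}
    (hN : N ≠ 0) {Q : ℤ_[p][X]} (hQ : Q.natDegree ≤ k) (hgQ : ∀ x, N • g x = Q.eval x) :
    g ∈ binomialSpan p k :=
  mem_binomialSpan_of_fwdDiff_iter_eq_zero hg
    (fwdDiff_iter_eq_zero_of_nsmul_eq_eval hN (Nat.lt_succ_of_le hQ) hgQ)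

theorem choose_mul_choose_mem_binomialSpan (a b : ℕ) :
    (fun x => Ring.choose x a * Ring.choose x b) ∈ binomialSpan p (a + b) := by
  refine mem_binomialSpan_of_nsmul_eq_eval (by fun_prop)
    (mul_ne_zero a.factorial_ne_zero b.factorial_ne_zero)
    (Q := descPochhammer ℤ_[p] a * descPochhammer ℤ_[p] b)
    (natDegree_mul_le.trans (by simp [descPochhammer_natDegree])) fun x => ?_
  rw [eval_mul, ← Ring.factorial_nsmul_choose_eq_eval, ← Ring.factorial_nsmul_choose_eq_eval,
    smul_mul_smul_comm]

theorem choose_mul_const_mem_binomialSpan (c : ℤ_[p]) (k : ℕ) :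
    (fun x => Ring.choose (x * c) k) ∈ binomialSpan p k := by
  refine mem_binomialSpan_of_nsmul_eq_eval (by fun_prop) k.factorial_ne_zero
    (Q := (descPochhammer ℤ_[p] k).comp (C c * X)) (natDegree_comp_le.trans ?_) fun x => ?_
  · rw [descPochhammer_natDegree]
    exact mul_le_of_le_one_right k.zero_le ((natDegree_C_mul_le c X).trans natDegree_X_le)
  · rw [eval_comp, eval_mul, eval_C, eval_X, mul_comm, ← Ring.factorial_nsmul_choose_eq_eval]

section Multivariate

variable {ι κ : Type*} [Fintype ι]

variable (p ι) in
/-- The paper's `Pol_{≤d}(ℤ_p^ι, ℤ_p)`. -/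
noncomputable def mvBinomialSpan (d : ℕ) : Submodule ℤ_[p] ((ι → ℤ_[p]) → ℤ_[p]) :=
  Submodule.span ℤ_[p]
    ((fun (m : ι → ℕ) (x : ι → ℤ_[p]) => ∏ j, Ring.choose (x j) (m j)) '' {m | ∑ j, m j ≤ d})

theorem monomial_mem_mvBinomialSpan {d : ℕ} {m : ι → ℕ} (hm : ∑ j, m j ≤ d) :
    (fun x : ι → ℤ_[p] => ∏ j, Ring.choose (x j) (m j)) ∈ mvBinomialSpan p ι d :=
  Submodule.subset_span ⟨m, hm, rfl⟩

theorem mvBinomialSpan_mono : Monotone (mvBinomialSpan p ι) :=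
  fun _ _ h => Submodule.span_mono (Set.image_mono fun _ hm => le_trans hm h)

theorem prod_mem_mvBinomialSpan {g : ι → ℤ_[p] → ℤ_[p]} {e : ι → ℕ}
    (hg : ∀ j, g j ∈ binomialSpan p (e j)) :
    (fun x : ι → ℤ_[p] => ∏ j, g j (x j)) ∈ mvBinomialSpan p ι (∑ j, e j) := by
  classical
  choose c hc using fun j => (Submodule.mem_span_range_iff_exists_fun ℤ_[p]).1 (hg j)
  have hexpand : (fun x : ι → ℤ_[p] => ∏ j, g j (x j)) = ∑ q : (j : ι) → Fin (e j + 1),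
      (∏ j, c j (q j)) • fun x => ∏ j, Ring.choose (x j) (q j) := by
    funext x
    simp only [← hc, Finset.sum_apply, Pi.smul_apply, smul_eq_mul, Fintype.prod_sum,
      Finset.prod_mul_distrib]
  rw [hexpand]
  refine Submodule.sum_mem _ fun q _ => Submodule.smul_mem _ _ (monomial_mem_mvBinomialSpan ?_)
  exact Finset.sum_le_sum fun j _ => Nat.lt_succ_iff.mp (q j).isLt

theorem mul_mem_mvBinomialSpan {a b : ℕ} {F G : (ι → ℤ_[p]) → ℤ_[p]}
    (hF : F ∈ mvBinomialSpan p ι a) (hG : G ∈ mvBinomialSpan p ι b) :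
    F * G ∈ mvBinomialSpan p ι (a + b) := by
  have hmul := Submodule.mul_mem_mul hF hG
  rw [mvBinomialSpan, mvBinomialSpan, Submodule.span_mul_span] at hmul
  refine Submodule.span_le.2 ?_ hmul
  rintro _ ⟨_, ⟨m, hm, rfl⟩, _, ⟨n, hn, rfl⟩, rfl⟩
  have hprod := prod_mem_mvBinomialSpan (p := p) (e := m + n)
    fun j => choose_mul_choose_mem_binomialSpan (m j) (n j)
  simp only [Pi.add_apply, Finset.sum_add_distrib] at hprod
  rw [SetLike.mem_coe]
  convert mvBinomialSpan_mono (add_le_add hm hn) hprod using 1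
  funext x
  simp [Finset.prod_mul_distrib]

instance : SetLike.GradedMonoid (mvBinomialSpan p ι) where
  one_mem := by
    convert monomial_mem_mvBinomialSpan (p := p) (ι := ι) (d := 0) (m := 0) (by simp) using 1
    funext x
    simp
  mul_mem _ _ _ _ := mul_mem_mvBinomialSpan

theorem comp_eval_mem_mvBinomialSpan {g : ℤ_[p] → ℤ_[p]} {k : ℕ} (hg : g ∈ binomialSpan p k)
    (j : ι) : (fun x : ι → ℤ_[p] => g (x j)) ∈ mvBinomialSpan p ι k := by
  classical
  have hmap : (binomialSpan p k).map (LinearMap.funLeft ℤ_[p] ℤ_[p] (Function.eval j)) ≤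
      mvBinomialSpan p ι k := by
    rw [binomialSpan, Submodule.map_span_le]
    rintro _ ⟨i, rfl⟩
    convert monomial_mem_mvBinomialSpan (p := p) (m := Pi.single j (i : ℕ))
      (by simpa using Nat.lt_succ_iff.mp i.isLt) using 1
    funext x
    simp [LinearMap.funLeft_apply, Pi.single_apply, apply_ite]
  exact hmap ⟨g, hg, rfl⟩

theorem choose_sum_mul_mem_mvBinomialSpan (c : ι → ℤ_[p]) (s : Finset ι) (k : ℕ) :
    (fun x : ι → ℤ_[p] => Ring.choose (∑ j ∈ s, x j * c j) k) ∈ mvBinomialSpan p ι k := by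
  classical
  induction s using Finset.induction_on generalizing k with
  | empty =>
    have hconst := Submodule.smul_mem _ (Ring.choose (0 : ℤ_[p]) k)
      (mvBinomialSpan_mono k.zero_le (SetLike.one_mem_graded (mvBinomialSpan p ι)))
    convert hconst using 1
    funext x
    simp
  | insert j s hj ih =>
    have hexpand : (fun x : ι → ℤ_[p] => Ring.choose (∑ i ∈ insert j s, x i * c i) k) =
        ∑ ab ∈ antidiagonal k, (fun x : ι → ℤ_[p] => Ring.choose (x j * c j) ab.1) *
          fun x : ι → ℤ_[p] => Ring.choose (∑ i ∈ s, x i * c i) ab.2 := by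
      funext x
      simp only [sum_insert hj, Ring.add_choose_eq (R := ℤ_[p]) k (Commute.all _ _),
        Finset.sum_apply, Pi.mul_apply]
    rw [hexpand]
    refine Submodule.sum_mem _ fun ab hab => ?_
    rw [← mem_antidiagonal.1 hab]
    exact SetLike.mul_mem_graded
      (comp_eval_mem_mvBinomialSpan (choose_mul_const_mem_binomialSpan _ ab.1) j) (ih ab.2)

theorem choose_comp_linearMap_mem_mvBinomialSpan (φ : (ι → ℤ_[p]) →ₗ[ℤ_[p]] ℤ_[p]) (k : ℕ) :
    (fun x => Ring.choose (φ x) k) ∈ mvBinomialSpan p ι k := by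
  classical
  convert choose_sum_mul_mem_mvBinomialSpan (fun j => φ fun i => if j = i then 1 else 0) univ k
    using 3 with x
  rw [φ.pi_apply_eq_sum_univ x]
  rfl

theorem prod_choose_comp_linearMap_mem_mvBinomialSpan
    [Fintype κ] (L : (ι → ℤ_[p]) →ₗ[ℤ_[p]] (κ → ℤ_[p])) (m : κ → ℕ) :
    (fun x => ∏ t, Ring.choose (L x t) (m t)) ∈ mvBinomialSpan p ι (∑ t, m t) := by
  convert SetLike.prod_mem_graded (mvBinomialSpan p ι) m (fun t x => Ring.choose (L x t) (m t))
    fun t _ => choose_comp_linearMap_mem_mvBinomialSpan ((LinearMap.proj t).comp L) (m t) using 1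
  funext x
  simp [Finset.prod_apply]

end Multivariate

end PadicInt

noncomputable def AddMonoidHom.toPadicIntLinearMap {p : ℕ} [Fact p.Prime] {M N : Type*}
    [AddCommGroup M] [Module ℤ_[p] M] [TopologicalSpace M] [ContinuousSMul ℤ_[p] M]
    [AddCommGroup N] [Module ℤ_[p] N] [TopologicalSpace N] [ContinuousSMul ℤ_[p] N] [T2Space N]
    (σ : M →+ N) (hσ : Continuous σ) : M →ₗ[ℤ_[p]] N where
  toFun := σ
  map_add' := σ.map_add
  map_smul' c x := by
    refine congrFun (PadicInt.denseRange_natCast.equalizer (g := fun c : ℤ_[p] => σ (c • x))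
      (h := fun c => c • σ x) (by fun_prop) (by fun_prop) (funext fun n => ?_)) c
    simp [Nat.cast_smul_eq_nsmul]

section IsPolyOfDeg

variable {ℓ : ℕ} [Fact ℓ.Prime] {O : Type*} [CommRing O] [Algebra ℤ_[ℓ] O]
  {A : Type*} [AddCommGroup A] [Module O A] {ι : Type*} [Fintype ι]

variable (ℓ O A ι) in
def polyOfDegSubmodule (Cb : ℤ_[ℓ] → ℕ → ℤ_[ℓ]) (d : ℕ) : Submodule O ((ι → ℤ_[ℓ]) → A) where
  carrier := {f | IsPolyOfDeg Cb O d f}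
  zero_mem' := ⟨0, fun _ _ => rfl, fun _ => by simp⟩
  add_mem' := by
    rintro f g ⟨a, ha, hfa⟩ ⟨b, hb, hgb⟩
    refine ⟨a + b, fun m hm => by simp [ha m hm, hb m hm], fun x => ?_⟩
    rw [Pi.add_apply, hfa, hgb,
      Finsupp.sum_add_index' (fun _ => smul_zero _) fun _ _ _ => smul_add _ _ _]
  smul_mem' := by
    rintro c f ⟨a, ha, hfa⟩
    refine ⟨c • a, fun m hm => by simp [ha m hm], fun x => ?_⟩
    rw [Pi.smul_apply, hfa, Finsupp.sum_smul_index' (fun _ => smul_zero _), Finsupp.smul_sum]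
    exact Finsupp.sum_congr fun m _ => smul_comm _ _ _

theorem algebraMap_smul_mem_polyOfDegSubmodule {d : ℕ} {F : (ι → ℤ_[ℓ]) → ℤ_[ℓ]}
    (hF : F ∈ PadicInt.mvBinomialSpan ℓ ι d) (v : A) :
    (fun x => algebraMap ℤ_[ℓ] O (F x) • v) ∈
      polyOfDegSubmodule ℓ O A ι (fun x k => Ring.choose x k) d := by
  induction hF using Submodule.span_induction with
  | mem F hF =>
    obtain ⟨m, hm, rfl⟩ := hF
    refine ⟨Finsupp.single m v, fun n hn => Finsupp.single_eq_of_ne ?_, fun x => ?_⟩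
    · rintro rfl
      exact absurd hm (not_le.2 hn)
    · simp [Finsupp.sum_single_index]
  | zero =>
    convert Submodule.zero_mem _ using 1
    funext x
    simp
  | add F G _ _ hF hG =>
    convert Submodule.add_mem _ hF hG using 1
    funext x
    simp [add_smul]
  | smul c F _ hF =>
    convert Submodule.smul_mem _ (algebraMap ℤ_[ℓ] O c) hF using 1
    funext x
    simp [mul_smul]

theorem IsPolyOfDeg.comp_linearMap {κ : Type*} [Fintype κ] {d : ℕ} {f : (κ → ℤ_[ℓ]) → A}
    (hf : IsPolyOfDeg (fun x k => Ring.choose x k) O d f)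
    (L : (ι → ℤ_[ℓ]) →ₗ[ℤ_[ℓ]] (κ → ℤ_[ℓ])) :
    IsPolyOfDeg (fun x k => Ring.choose x k) O d (f ∘ L) := by
  obtain ⟨a, ha, hfa⟩ := hf
  have hexpand : f ∘ L = ∑ m ∈ a.support,
      fun x => algebraMap ℤ_[ℓ] O (∏ t, Ring.choose (L x t) (m t)) • a m := by
    funext x
    simp [hfa, Finsupp.sum]
  rw [hexpand]
  refine Submodule.sum_mem (polyOfDegSubmodule ℓ O A ι _ d) fun m hm =>
    algebraMap_smul_mem_polyOfDegSubmodule (PadicInt.mvBinomialSpan_mono ?_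
      (PadicInt.prod_choose_comp_linearMap_mem_mvBinomialSpan L m)) (a m)
  by_contra h
  exact Finsupp.mem_support_iff.1 hm (ha m (not_le.1 h))

theorem IsPolyOfDeg.comp_continuous_addMonoidHom {κ : Type*} [Fintype κ] {d : ℕ}
    {f : (κ → ℤ_[ℓ]) → A} (hf : IsPolyOfDeg (fun x k => Ring.choose x k) O d f)
    (σ : (ι → ℤ_[ℓ]) →+ (κ → ℤ_[ℓ])) (hσ : Continuous σ) :
    IsPolyOfDeg (fun x k => Ring.choose x k) O d (f ∘ σ) :=
  hf.comp_linearMap (σ.toPadicIntLinearMap hσ)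

end IsPolyOfDeg

theorem polyOfDeg_comp_continuous_autom_general
    (ℓ : ℕ) [Fact (Nat.Prime ℓ)]
    (E : Type*) [Field E]
    [Algebra ℤ_[ℓ] E]
    (Cb : ℤ_[ℓ] → ℕ → ℤ_[ℓ])
    (hCb_cont : ∀ k, Continuous fun x => Cb x k)
    (hCb_nat : ∀ n k : ℕ, Cb (n : ℤ_[ℓ]) k = ((n.choose k : ℕ) : ℤ_[ℓ]))
    (A : Type*) [AddCommGroup A] [Module ↥(PaperOE ℓ E) A]
    (r d : ℕ) :
    (∀ σ : (Fin r → ℤ_[ℓ]) ≃+ (Fin r → ℤ_[ℓ]), Continuous σ → Continuous σ.symm →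
      ∀ f : (Fin r → ℤ_[ℓ]) → A,
        IsPolyOfDeg Cb ↥(PaperOE ℓ E) d f → IsPolyOfDeg Cb ↥(PaperOE ℓ E) d (f ∘ σ)) ∧
    (∀ (N : Type) [AddCommGroup N] [TopologicalSpace N] [IsTopologicalAddGroup N]
      (ψ₁ ψ₂ : N ≃+ (Fin r → ℤ_[ℓ])),
        Continuous ψ₁ → Continuous ψ₁.symm → Continuous ψ₂ → Continuous ψ₂.symm →
        ∀ f : N → A,
          (IsPolyOfDeg Cb ↥(PaperOE ℓ E) d (f ∘ ψ₁.symm) ↔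
            IsPolyOfDeg Cb ↥(PaperOE ℓ E) d (f ∘ ψ₂.symm))) := by
  obtain rfl := PadicInt.eq_choose_of_continuous hCb_cont hCb_nat
  refine ⟨fun σ hσ _ f hf => hf.comp_continuous_addMonoidHom σ.toAddMonoidHom hσ,
    fun N _ _ _ ψ₁ ψ₂ h₁ h₁' h₂ h₂' f => ⟨fun hf => ?_, fun hf => ?_⟩⟩
  · simpa [Function.comp_def] using
      hf.comp_continuous_addMonoidHom (ψ₂.symm.trans ψ₁).toAddMonoidHom (h₁.comp h₂')
  · simpa [Function.comp_def] using
      hf.comp_continuous_addMonoidHom (ψ₁.symm.trans ψ₂).toAddMonoidHom (h₂.comp h₁')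

theorem polyOfDeg_comp_continuous_autom
    (ℓ : ℕ) [Fact (Nat.Prime ℓ)]
    (E : Type*) [Field E] [Algebra ℚ_[ℓ] E] [FiniteDimensional ℚ_[ℓ] E]
    [Algebra ℤ_[ℓ] E] [IsScalarTower ℤ_[ℓ] ℚ_[ℓ] E]
    (Cb : ℤ_[ℓ] → ℕ → ℤ_[ℓ])
    (hCb_cont : ∀ k, Continuous fun x => Cb x k)
    (hCb_nat : ∀ n k : ℕ, Cb (n : ℤ_[ℓ]) k = ((n.choose k : ℕ) : ℤ_[ℓ]))
    (A : Type*) [AddCommGroup A] [Module ↥(PaperOE ℓ E) A]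
    (r d : ℕ) :
    (∀ σ : (Fin r → ℤ_[ℓ]) ≃+ (Fin r → ℤ_[ℓ]), Continuous σ → Continuous σ.symm →
      ∀ f : (Fin r → ℤ_[ℓ]) → A,
        IsPolyOfDeg Cb ↥(PaperOE ℓ E) d f → IsPolyOfDeg Cb ↥(PaperOE ℓ E) d (f ∘ σ)) ∧
    (∀ (N : Type) [AddCommGroup N] [TopologicalSpace N] [IsTopologicalAddGroup N]
      (ψ₁ ψ₂ : N ≃+ (Fin r → ℤ_[ℓ])),
        Continuous ψ₁ → Continuous ψ₁.symm → Continuous ψ₂ → Continuous ψ₂.symm →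
        ∀ f : N → A,
          (IsPolyOfDeg Cb ↥(PaperOE ℓ E) d (f ∘ ψ₁.symm) ↔
            IsPolyOfDeg Cb ↥(PaperOE ℓ E) d (f ∘ ψ₂.symm))) :=
  polyOfDeg_comp_continuous_autom_general ℓ E Cb hCb_cont hCb_nat A r d
end
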